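/- The cutfree sequent calculus LM→ is sound and complete with respect to minimal propositional logic: a purely implicational formula ρ is valid in minimal logic (i.e., has a tree-like NM→ proof) if and only if the sequent ⇒ ρ is provable in LM→ by a tree-like deduction. -/

import Mathlib

/-- Purely implicational formulas: built from propositional variables by `→`. -/
inductive Fml : Type
  | var : ℕ → Fml
  | imp : Fml → Fml → Fml
deriving DecidableEq

namespace Fml

/-- The weight of a formula: its total number of symbols. -/
def weight : Fml → ℕ
  | var _ => 1
  | imp a b => weight a + weight b + 1

/-- The (reflexive) subformula relation. -/
inductive Sub : Fml → Fml → Prop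
  | refl (φ : Fml) : Sub φ φ
  | impL {φ a b : Fml} : Sub φ a → Sub φ (imp a b)
  | impR {φ a b : Fml} : Sub φ b → Sub φ (imp a b)

/-- The antecedent of an implication (junk value on variables). -/
def antecedent : Fml → Fml
  | var n => var n
  | imp a _ => a

end Fml

/-- Tree-like natural deductions (with possible repetition nodes, i.e. NM→⁺-trees). -/
inductive DT : Type
  | leaf (φ : Fml)
  | impI (α β : Fml) (t : DT)
  | impE (α β : Fml) (t₁ t₂ : DT)
  | rep (φ : Fml) (ts : List DT)

namespace DT

/-- The formula labelling the root of a deduction tree. -/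
def label : DT → Fml
  | leaf φ => φ
  | impI α β _ => .imp α β
  | impE _ β _ _ => β
  | rep φ _ => φ

/-- Local correctness of a deduction tree w.r.t. the rules (→I), (→E), (R)ₙ (n ≥ 1). -/
inductive Correct : DT → Prop
  | leaf (φ : Fml) : Correct (leaf φ)
  | impI {α β : Fml} {t : DT} : t.label = β → Correct t → Correct (impI α β t)
  | impE {α β : Fml} {t₁ t₂ : DT} : t₁.label = α → t₂.label = .imp α β →
      Correct t₁ → Correct t₂ → Correct (impE α β t₁ t₂)
  | rep {φ : Fml} {ts : List DT} : ts ≠ [] → (∀ t ∈ ts, label t = φ) →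
      (∀ t ∈ ts, Correct t) → Correct (rep φ ts)

/-- A deduction lies in NM→ iff it uses no repetition rule. -/
inductive RepFree : DT → Prop
  | leaf (φ : Fml) : RepFree (leaf φ)
  | impI {α β : Fml} {t : DT} : RepFree t → RepFree (impI α β t)
  | impE {α β : Fml} {t₁ t₂ : DT} : RepFree t₁ → RepFree t₂ → RepFree (impE α β t₁ t₂)

/-- `ClosedUnder D t` : every deductive path of `t` from a leaf labelled `α` to the
root of `t` either contains the conclusion of an (→I)-inference discharging `α`, or
`α ∈ D` (the formulas discharged strictly below `t`).  With `D = ∅` this says that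
every deductive path of `t` is closed. -/
inductive ClosedUnder : Set Fml → DT → Prop
  | leaf {D : Set Fml} {φ : Fml} : φ ∈ D → ClosedUnder D (leaf φ)
  | impI {D : Set Fml} {α β : Fml} {t : DT} :
      ClosedUnder (insert α D) t → ClosedUnder D (impI α β t)
  | impE {D : Set Fml} {α β : Fml} {t₁ t₂ : DT} :
      ClosedUnder D t₁ → ClosedUnder D t₂ → ClosedUnder D (impE α β t₁ t₂)
  | rep {D : Set Fml} {φ : Fml} {ts : List DT} :
      (∀ t ∈ ts, ClosedUnder D t) → ClosedUnder D (rep φ ts)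

/-- The height of a deduction tree. -/
def height : DT → ℕ
  | leaf _ => 0
  | impI _ _ t => height t + 1
  | impE _ _ t₁ t₂ => max (height t₁) (height t₂) + 1
  | rep _ ts => (ts.attach.map fun t => height t.1).foldr max 0 + 1
decreasing_by
  all_goals simp_wf
  all_goals try have := List.sizeOf_lt_of_mem t.2
  all_goals omega

/-- The set of distinct formulas occurring in a deduction tree. -/
def formulas : DT → Finset Fml
  | leaf φ => {φ}
  | impI α β t => insert (.imp α β) (formulas t)
  | impE _ β t₁ t₂ => insert β (formulas t₁ ∪ formulas t₂)
  | rep φ ts => insert φ ((ts.attach.map fun t => formulas t.1).foldr (· ∪ ·) ∅)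
decreasing_by
  all_goals simp_wf
  all_goals try have := List.sizeOf_lt_of_mem t.2
  all_goals omega

/-- `φ(∂)`: the total weight of the set of distinct formulas occurring in `∂`. -/
def phi (t : DT) : ℕ := (t.formulas).sum Fml.weight

/-- The depths (= heights in the tree) of the leaves of a deduction tree. -/
def leafDepths : DT → List ℕ
  | leaf _ => [0]
  | impI _ _ t => (leafDepths t).map (· + 1)
  | impE _ _ t₁ t₂ => (leafDepths t₁ ++ leafDepths t₂).map (· + 1)
  | rep _ ts => ((ts.attach.map fun t => leafDepths t.1).flatten).map (· + 1)
decreasing_by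
  all_goals simp_wf
  all_goals try have := List.sizeOf_lt_of_mem t.2
  all_goals omega

/-- All leaves (top nodes) of the deduction have the same height. -/
def UniformLeaves (t : DT) : Prop := ∀ d ∈ t.leafDepths, d = t.height

/-- `t` is a tree-like NM→ proof of `ρ` : a locally correct, repetition-free tree
with conclusion `ρ`, all of whose deductive paths are closed. -/
def IsProofNM (t : DT) (ρ : Fml) : Prop :=
  t.RepFree ∧ t.Correct ∧ t.ClosedUnder ∅ ∧ t.label = ρ

/-- `t` is a tree-like NM→⁺ proof of `ρ`. -/
def IsProofNMPlus (t : DT) (ρ : Fml) : Prop :=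
  t.Correct ∧ t.ClosedUnder ∅ ∧ t.label = ρ

end DT

/-- `ρ` is valid in minimal logic iff it has a tree-like NM→ proof. -/
def MinValid (ρ : Fml) : Prop := ∃ t : DT, t.IsProofNM ρ

namespace Fml

/-- The set of propositional variables occurring in a formula. -/
def vars : Fml → Finset ℕ
  | var n => {n}
  | imp a b => a.vars ∪ b.vars

end Fml

/-- Tree-like deductions in Hudelmaier's cutfree sequent calculus LM→ for minimal
logic (sequents `Γ ⇒ α` with `Γ` a multiset of purely implicational formulas). -/
inductive LMT : Type
  | ax (Γ : Multiset Fml) (p : ℕ)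
  | i1 (Γ : Multiset Fml) (α β : Fml) (t : LMT)
  | i2 (Γ : Multiset Fml) (α β γ : Fml) (t : LMT)
  | eP (Γ : Multiset Fml) (p : ℕ) (γ : Fml) (q : ℕ) (t : LMT)
  | eE (Γ : Multiset Fml) (α β γ : Fml) (q : ℕ) (t₁ t₂ : LMT)

namespace LMT

/-- The antecedent of the end-sequent. -/
def ante : LMT → Multiset Fml
  | ax Γ p => (Fml.var p) ::ₘ Γ
  | i1 Γ _ _ _ => Γ
  | i2 Γ α β γ _ => (Fml.imp (.imp α β) γ) ::ₘ Γ
  | eP Γ p γ _ _ => (Fml.var p) ::ₘ (Fml.imp (.var p) γ) ::ₘ Γ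
  | eE Γ α β γ _ _ _ => (Fml.imp (.imp α β) γ) ::ₘ Γ

/-- The succedent of the end-sequent. -/
def succ : LMT → Fml
  | ax _ p => .var p
  | i1 _ α β _ => .imp α β
  | i2 _ α β _ _ => .imp α β
  | eP _ _ _ q _ => .var q
  | eE _ _ _ _ q _ _ => .var q

/-- `q ∈ VAR(Γ, γ)`. -/
def inVars (q : ℕ) (Γ : Multiset Fml) (γ : Fml) : Prop :=
  q ∈ γ.vars ∨ ∃ δ ∈ Γ, q ∈ δ.vars

/-- Local correctness of an LM→ deduction tree (rules (MA), (MI1→), (MI2→),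
(ME→P), (ME→→), with their side constraints). -/
inductive Correct : LMT → Prop
  | ax (Γ : Multiset Fml) (p : ℕ) : Correct (ax Γ p)
  | i1 {Γ : Multiset Fml} {α β : Fml} {t : LMT} :
      Correct t → t.ante = α ::ₘ Γ → t.succ = β →
      (∀ γ : Fml, Fml.imp (.imp α β) γ ∉ Γ) → Correct (i1 Γ α β t)
  | i2 {Γ : Multiset Fml} {α β γ : Fml} {t : LMT} :
      Correct t → t.ante = α ::ₘ (Fml.imp β γ) ::ₘ Γ → t.succ = β →
      Correct (i2 Γ α β γ t)
  | eP {Γ : Multiset Fml} {p : ℕ} {γ : Fml} {q : ℕ} {t : LMT} :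
      Correct t → t.ante = (Fml.var p) ::ₘ γ ::ₘ Γ → t.succ = .var q →
      inVars q Γ γ → p ≠ q → Correct (eP Γ p γ q t)
  | eE {Γ : Multiset Fml} {α β γ : Fml} {q : ℕ} {t₁ t₂ : LMT} :
      Correct t₁ → Correct t₂ →
      t₁.ante = α ::ₘ (Fml.imp β γ) ::ₘ Γ → t₁.succ = β →
      t₂.ante = γ ::ₘ Γ → t₂.succ = .var q →
      inVars q Γ γ → Correct (eE Γ α β γ q t₁ t₂)

/-- The height of an LM→ deduction tree. -/
def height : LMT → ℕ
  | ax _ _ => 0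
  | i1 _ _ _ t => t.height + 1
  | i2 _ _ _ _ t => t.height + 1
  | eP _ _ _ _ t => t.height + 1
  | eE _ _ _ _ _ t₁ t₂ => max t₁.height t₂.height + 1

/-- The set of distinct formulas occurring (in the sequents) of an LM→ deduction. -/
def formulas : LMT → Finset Fml
  | t@(ax _ _) => insert t.succ t.ante.toFinset
  | t@(i1 _ _ _ s) => insert t.succ t.ante.toFinset ∪ formulas s
  | t@(i2 _ _ _ _ s) => insert t.succ t.ante.toFinset ∪ formulas s
  | t@(eP _ _ _ _ s) => insert t.succ t.ante.toFinset ∪ formulas s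
  | t@(eE _ _ _ _ _ s₁ s₂) => insert t.succ t.ante.toFinset ∪ formulas s₁ ∪ formulas s₂

/-- The total weight of the set of distinct formulas occurring in an LM→ deduction. -/
def phi (t : LMT) : ℕ := (t.formulas).sum Fml.weight

end LMT

/-!
Both directions pass through natural-deduction provability `Prov`. Every LM→ rule is
admissible for `Prov`, with one cut for (MI2→), (ME→P) and (ME→→). Conversely, backward proof
search in LM→ terminates, since premises have smaller `seqRank` than conclusions, and each
failed rule application leaves a rooted Kripke countermodel: (MI1→), (MI2→) and (ME→P) are
invertible, and when only (ME→→) is left and none of its instances succeeds, the countermodels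
of the sequents `Γ ⇒ α → β` for `(α → β) → γ ∈ Γ` are put side by side above a fresh root.
Hence every sequent is derivable or refutable, and `Prov` is sound for Kripke models.
-/

open Fml

inductive Prov : Set Fml → Fml → Prop
  | hyp {Γ : Set Fml} {φ : Fml} : φ ∈ Γ → Prov Γ φ
  | intro {Γ : Set Fml} {α β : Fml} : Prov (insert α Γ) β → Prov Γ (imp α β)
  | elim {Γ : Set Fml} {α β : Fml} : Prov Γ (imp α β) → Prov Γ α → Prov Γ β

namespace Prov

theorem mono {Γ Δ : Set Fml} {φ : Fml} (h : Prov Γ φ) (hΓΔ : Γ ⊆ Δ) : Prov Δ φ := by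
  induction h generalizing Δ with
  | hyp hφ => exact hyp (hΓΔ hφ)
  | intro _ ih => exact intro (ih (Set.insert_subset_insert hΓΔ))
  | elim _ _ ih₁ ih₂ => exact elim (ih₁ hΓΔ) (ih₂ hΓΔ)

theorem cut {Γ : Set Fml} {δ φ : Fml} (hδ : Prov Γ δ) (hφ : Prov (insert δ Γ) φ) : Prov Γ φ :=
  elim (intro hφ) hδ

theorem imp_of_imp_imp {Γ : Set Fml} {α β γ : Fml} (hΓ : imp (imp α β) γ ∈ Γ)
    (h : Prov (insert α (insert (imp β γ) Γ)) β) : Prov Γ (imp α β) := by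
  have hβγ : Prov Γ (imp β γ) :=
    intro (elim (hyp (Set.mem_insert_of_mem _ hΓ)) (intro (hyp (by simp))))
  refine intro (cut (hβγ.mono (Set.subset_insert _ _)) (h.mono ?_))
  intro x hx
  simp only [Set.mem_insert_iff] at hx ⊢
  tauto

end Prov

theorem DT.RepFree.prov {t : DT} (hr : t.RepFree) (hc : t.Correct) {D : Set Fml}
    (hD : t.ClosedUnder D) : Prov D t.label := by
  induction hr generalizing D with
  | leaf φ =>
    cases hD with
    | leaf hφ => exact .hyp hφ
  | impI _ ih =>
    cases hc with
    | impI hl hc =>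
      cases hD with
      | impI hD => exact .intro (hl ▸ ih hc hD)
  | impE _ _ ih₁ ih₂ =>
    cases hc with
    | impE hl₁ hl₂ hc₁ hc₂ =>
      cases hD with
      | impE hD₁ hD₂ => exact .elim (hl₂ ▸ ih₂ hc₂ hD₂) (hl₁ ▸ ih₁ hc₁ hD₁)

theorem Prov.exists_dt {Γ : Set Fml} {φ : Fml} (h : Prov Γ φ) :
    ∃ t : DT, t.RepFree ∧ t.Correct ∧ t.ClosedUnder Γ ∧ t.label = φ := by
  induction h with
  | @hyp _ φ hφ => exact ⟨.leaf φ, .leaf φ, .leaf φ, .leaf hφ, rfl⟩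
  | @intro _ α β _ ih =>
    obtain ⟨t, hr, hc, hD, hl⟩ := ih
    exact ⟨.impI α β t, .impI hr, .impI hl hc, .impI hD, rfl⟩
  | @elim _ α β _ _ ih₁ ih₂ =>
    obtain ⟨t₂, hr₂, hc₂, hD₂, hl₂⟩ := ih₁
    obtain ⟨t₁, hr₁, hc₁, hD₁, hl₁⟩ := ih₂
    exact ⟨.impE α β t₁ t₂, .impE hr₁ hr₂, .impE hl₁ hl₂ hc₁ hc₂, .impE hD₁ hD₂, rfl⟩

theorem minValid_iff_prov (ρ : Fml) : MinValid ρ ↔ Prov ∅ ρ :=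
  ⟨fun ⟨_, hr, hc, hD, hl⟩ => hl ▸ hr.prov hc hD, Prov.exists_dt⟩

theorem LMT.Correct.prov {t : LMT} (ht : t.Correct) {Δ : Set Fml} (hΔ : ∀ δ ∈ t.ante, δ ∈ Δ) :
    Prov Δ t.succ := by
  induction ht generalizing Δ with
  | ax Γ p => exact .hyp (hΔ _ (Multiset.mem_cons_self _ _))
  | i1 _ hante hsucc _ ih =>
    simp only [LMT.ante] at hΔ
    refine .intro (hsucc ▸ ih ?_)
    simp only [hante, Multiset.forall_mem_cons, Set.mem_insert_iff]
    tauto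
  | i2 _ hante hsucc ih =>
    simp only [LMT.ante, Multiset.forall_mem_cons] at hΔ
    refine .imp_of_imp_imp hΔ.1 (hsucc ▸ ih ?_)
    simp only [hante, Multiset.forall_mem_cons, Set.mem_insert_iff]
    tauto
  | eP _ hante hsucc _ _ ih =>
    simp only [LMT.ante, LMT.succ, Multiset.forall_mem_cons] at hΔ ⊢
    rw [← hsucc]
    refine .cut (.elim (.hyp hΔ.2.1) (.hyp hΔ.1)) (ih ?_)
    simp only [hante, Multiset.forall_mem_cons, Set.mem_insert_iff]
    tauto
  | eE _ _ hante₁ hsucc₁ hante₂ hsucc₂ _ ih₁ ih₂ =>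
    simp only [LMT.ante, LMT.succ, Multiset.forall_mem_cons] at hΔ ⊢
    have hαβ := Prov.imp_of_imp_imp hΔ.1 (hsucc₁ ▸ ih₁ (by
      simp only [hante₁, Multiset.forall_mem_cons, Set.mem_insert_iff]
      tauto))
    rw [← hsucc₂]
    refine .cut (.elim (.hyp hΔ.1) hαβ) (ih₂ ?_)
    simp only [hante₂, Multiset.forall_mem_cons, Set.mem_insert_iff]
    tauto

section Kripke

variable {W : Type*} [Preorder W] {V : W → ℕ → Prop}

def Forces (V : W → ℕ → Prop) : Fml → W → Prop
  | var n, w => V w n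
  | imp a b, w => ∀ v, w ≤ v → Forces V a v → Forces V b v

theorem Forces.mono (hV : ∀ n, Monotone (V · n)) {φ : Fml} {w v : W} (h : Forces V φ w)
    (hwv : w ≤ v) : Forces V φ v := by
  cases φ with
  | var n => exact hV n hwv h
  | imp a b => exact fun u hvu ha => h u (hwv.trans hvu) ha

theorem Prov.forces (hV : ∀ n, Monotone (V · n)) {Γ : Set Fml} {φ : Fml} (h : Prov Γ φ)
    {w : W} (hw : ∀ δ ∈ Γ, Forces V δ w) : Forces V φ w := by
  induction h generalizing w with
  | hyp hφ => exact hw _ hφ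
  | intro _ ih =>
    refine fun v hwv hα => ih fun δ hδ => ?_
    rcases hδ with rfl | hδ
    · exact hα
    · exact (hw δ hδ).mono hV hwv
  | elim _ _ ih₁ ih₂ => exact ih₁ hw w le_rfl (ih₂ hw)

theorem forces_imp_imp (hV : ∀ n, Monotone (V · n)) {α β γ : Fml} {w : W}
    (hα : Forces V α w) (hβγ : Forces V (imp β γ) w) : Forces V (imp (imp α β) γ) w :=
  fun v hwv hαβ => (hβγ.mono hV hwv) v le_rfl (hαβ v le_rfl (hα.mono hV hwv))

end Kripke

section Glue

variable {ι : Type*} {W : ι → Type*} [∀ i, Preorder (W i)]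

/-- The models `W i` placed side by side above a new root `⊥` at which exactly `P` holds. -/
def glueVal (P : ℕ → Prop) (V : ∀ i, W i → ℕ → Prop) (x : WithBot (Σ i, W i)) (n : ℕ) : Prop :=
  x.recBotCoe (P n) fun u => V u.1 u.2 n

variable {P : ℕ → Prop} {V : ∀ i, W i → ℕ → Prop}

theorem glueVal_monotone (hV : ∀ i n, Monotone (V i · n)) (hP : ∀ n, P n → ∀ i u, V i u n)
    (n : ℕ) : Monotone (glueVal P V · n) := by
  intro x y hxy hx
  induction y using WithBot.recBotCoe with
  | bot => rwa [WithBot.le_bot_iff.1 hxy] at hx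
  | coe y =>
    induction x using WithBot.recBotCoe with
    | bot => exact hP n hx _ _
    | coe x =>
      obtain ⟨i, u, v, huv⟩ := WithBot.coe_le_coe.1 hxy
      exact hV i n huv hx

theorem forces_glueVal_coe (φ : Fml) (i : ι) (u : W i) :
    Forces (glueVal P V) φ ((⟨i, u⟩ : Σ i, W i) : WithBot (Σ i, W i)) ↔ Forces (V i) φ u := by
  induction φ generalizing u with
  | var n => rfl
  | imp a b iha ihb =>
    constructor
    · intro h v huv ha
      exact (ihb v).1 (h _ (WithBot.coe_le_coe.2 (Sigma.mk_le_mk_iff.2 huv)) ((iha v).2 ha))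
    · intro h y huy ha
      obtain ⟨⟨j, v⟩, rfl, huv⟩ := WithBot.coe_le_iff.1 huy
      obtain ⟨hij, huv⟩ := Sigma.le_def.1 huv
      obtain rfl : i = j := hij
      exact (ihb v).2 (h v huv ((iha v).1 ha))

end Glue

def Derivable (Γ : Multiset Fml) (φ : Fml) : Prop :=
  ∃ t : LMT, t.Correct ∧ t.ante = Γ ∧ t.succ = φ

theorem Derivable.exists_mem_vars {Γ : Multiset Fml} {q : ℕ} (h : Derivable Γ (var q)) :
    ∃ δ ∈ Γ, q ∈ δ.vars := by
  obtain ⟨t, ht, rfl, hq⟩ := h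
  cases ht with
  | ax => cases hq; exact ⟨var _, Multiset.mem_cons_self _ _, by simp [Fml.vars]⟩
  | i1 => cases hq
  | i2 => cases hq
  | eP _ _ _ hq' _ =>
    cases hq
    simp only [LMT.inVars] at hq'
    simp only [LMT.ante, Multiset.mem_cons, exists_eq_or_imp, Fml.vars, Finset.mem_union]
    tauto
  | eE _ _ _ _ _ _ hq' =>
    cases hq
    simp only [LMT.inVars] at hq'
    simp only [LMT.ante, Multiset.mem_cons, exists_eq_or_imp, Fml.vars, Finset.mem_union]
    tauto

theorem Derivable.inVars {Γ : Multiset Fml} {γ : Fml} {q : ℕ} (h : Derivable (γ ::ₘ Γ) (var q)) :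
    LMT.inVars q Γ γ := by
  simpa [LMT.inVars] using h.exists_mem_vars

structure Countermodel (Γ : Multiset Fml) (φ : Fml) where
  W : Type
  [preorder : Preorder W]
  val : W → ℕ → Prop
  val_mono : ∀ n, Monotone (val · n)
  root : W
  isBot_root : IsBot root
  forces_ante : ∀ δ ∈ Γ, Forces val δ root
  not_forces_succ : ¬ Forces val φ root

attribute [instance] Countermodel.preorder

def Refutable (Γ : Multiset Fml) (φ : Fml) : Prop := Nonempty (Countermodel Γ φ)

namespace Refutable

variable {Γ : Multiset Fml} {α β γ φ : Fml}

theorem intro_imp (h : Refutable (α ::ₘ Γ) β) : Refutable Γ (imp α β) := by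
  obtain ⟨M⟩ := h
  obtain ⟨hα, hΓ⟩ := Multiset.forall_mem_cons.1 M.forces_ante
  exact ⟨{ M with
    forces_ante := hΓ
    not_forces_succ := fun h => M.not_forces_succ (h _ le_rfl hα) }⟩

theorem intro_imp_imp (h : Refutable (α ::ₘ imp β γ ::ₘ Γ) β) :
    Refutable (imp (imp α β) γ ::ₘ Γ) (imp α β) := by
  obtain ⟨M⟩ := h
  obtain ⟨hα, hβγ, hΓ⟩ : Forces M.val α M.root ∧ Forces M.val (imp β γ) M.root ∧
      ∀ δ ∈ Γ, Forces M.val δ M.root := by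
    simpa only [Multiset.forall_mem_cons] using M.forces_ante
  exact ⟨{ M with
    forces_ante := Multiset.forall_mem_cons.2 ⟨forces_imp_imp M.val_mono hα hβγ, hΓ⟩
    not_forces_succ := fun h => M.not_forces_succ (h _ le_rfl hα) }⟩

theorem cons_imp (δ : Fml) (h : Refutable (γ ::ₘ Γ) φ) : Refutable (imp δ γ ::ₘ Γ) φ := by
  obtain ⟨M⟩ := h
  obtain ⟨hγ, hΓ⟩ := Multiset.forall_mem_cons.1 M.forces_ante
  exact ⟨{ M with
    forces_ante := Multiset.forall_mem_cons.2 ⟨fun _ hv _ => hγ.mono M.val_mono hv, hΓ⟩ }⟩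

end Refutable

/-- The factor `2` makes the first premise `α, β → γ, Γ ⇒ β` of (ME→→) lighter than its
conclusion, although `β` moves into the succedent. -/
def Fml.rank : Fml → ℕ
  | var _ => 1
  | imp a b => a.rank + 2 * b.rank

theorem Fml.one_le_rank (φ : Fml) : 1 ≤ φ.rank := by
  cases φ with
  | var => rfl
  | imp a b => have := a.one_le_rank; simp only [Fml.rank]; omega

def seqRank (Γ : Multiset Fml) (φ : Fml) : ℕ := (Γ.map Fml.rank).sum + φ.rank

def DecidedBelow (n : ℕ) : Prop :=
  ∀ Γ φ, seqRank Γ φ < n → Derivable Γ φ ∨ Refutable Γ φ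

theorem derivable_or_refutable_imp {Γ : Multiset Fml} {α β : Fml}
    (ih : DecidedBelow (seqRank Γ (imp α β))) :
    Derivable Γ (imp α β) ∨ Refutable Γ (imp α β) := by
  by_cases hΓ : ∃ γ, imp (imp α β) γ ∈ Γ
  · obtain ⟨γ, hγ⟩ := hΓ
    obtain ⟨Γ, rfl⟩ := Multiset.exists_cons_of_mem hγ
    have := α.one_le_rank
    rcases ih (α ::ₘ imp β γ ::ₘ Γ) β (by simp [seqRank, Fml.rank]; omega) with
      ⟨t, ht, hante, hsucc⟩ | h
    · exact .inl ⟨.i2 Γ α β γ t, .i2 ht hante hsucc, rfl, rfl⟩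
    · exact .inr h.intro_imp_imp
  · have := β.one_le_rank
    rcases ih (α ::ₘ Γ) β (by simp [seqRank, Fml.rank]; omega) with
      ⟨t, ht, hante, hsucc⟩ | h
    · exact .inl ⟨.i1 Γ α β t, .i1 ht hante hsucc (not_exists.1 hΓ), rfl, rfl⟩
    · exact .inr h.intro_imp

theorem derivable_or_refutable_var_imp {Γ : Multiset Fml} {p q : ℕ} {γ : Fml} (hpq : p ≠ q)
    (ih : DecidedBelow (seqRank (var p ::ₘ imp (var p) γ ::ₘ Γ) (var q))) :
    Derivable (var p ::ₘ imp (var p) γ ::ₘ Γ) (var q) ∨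
      Refutable (var p ::ₘ imp (var p) γ ::ₘ Γ) (var q) := by
  rcases ih (var p ::ₘ γ ::ₘ Γ) (var q) (by simp [seqRank, Fml.rank]; omega) with
    ⟨t, ht, hante, hsucc⟩ | h
  · have hq : LMT.inVars q Γ γ := by
      obtain ⟨δ, hδ, hqδ⟩ := Derivable.exists_mem_vars ⟨t, ht, hante, hsucc⟩
      simp only [Multiset.mem_cons] at hδ
      rcases hδ with rfl | rfl | hδ
      · simp [Fml.vars, Ne.symm hpq] at hqδ
      · exact .inl hqδ
      · exact .inr ⟨δ, hδ, hqδ⟩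
    exact .inl ⟨.eP Γ p γ q t, .eP ht hante hsucc hq hpq, rfl, rfl⟩
  · rw [Multiset.cons_swap] at h ⊢
    exact .inr (h.cons_imp _)

theorem derivable_or_refutable_or_refutable_imp_imp {Γ : Multiset Fml} {α β γ : Fml} {q : ℕ}
    (ih : DecidedBelow (seqRank (imp (imp α β) γ ::ₘ Γ) (var q))) :
    (Derivable (imp (imp α β) γ ::ₘ Γ) (var q) ∨ Refutable (imp (imp α β) γ ::ₘ Γ) (var q)) ∨
      Refutable (imp (imp α β) γ ::ₘ Γ) (imp α β) := by
  have := α.one_le_rank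
  rcases ih (γ ::ₘ Γ) (var q) (by simp [seqRank, Fml.rank]; omega) with h₂ | h₂
  · rcases ih (α ::ₘ imp β γ ::ₘ Γ) β (by simp [seqRank, Fml.rank]; omega) with h₁ | h₁
    · obtain ⟨t₁, ht₁, hante₁, hsucc₁⟩ := h₁
      obtain ⟨t₂, ht₂, hante₂, hsucc₂⟩ := id h₂
      exact .inl (.inl ⟨.eE Γ α β γ q t₁ t₂, .eE ht₁ ht₂ hante₁ hsucc₁ hante₂ hsucc₂ h₂.inVars,
        rfl, rfl⟩)
    · exact .inr h₁.intro_imp_imp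
  · exact .inl (.inr (h₂.cons_imp _))

theorem refutable_var_of_saturated {Γ : Multiset Fml} {q : ℕ} (hq : var q ∉ Γ)
    (hsat : ∀ p γ, var p ∈ Γ → imp (var p) γ ∉ Γ)
    (href : ∀ α β γ, imp (imp α β) γ ∈ Γ → Refutable Γ (imp α β)) :
    Refutable Γ (var q) := by
  let ι := {θ : Fml × Fml × Fml // imp (imp θ.1 θ.2.1) θ.2.2 ∈ Γ}
  let M : ∀ i : ι, Countermodel Γ (imp i.1.1 i.1.2.1) := fun i => (href _ _ _ i.2).some
  have hM : ∀ δ ∈ Γ, ∀ i u, Forces (M i).val δ u := fun δ hδ i u =>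
    ((M i).forces_ante δ hδ).mono (M i).val_mono ((M i).isBot_root u)
  have hV := glueVal_monotone (fun i => (M i).val_mono) fun n hn => hM (var n) hn
  refine ⟨{
    W := WithBot (Σ i, (M i).W)
    val := glueVal (fun n => var n ∈ Γ) fun i => (M i).val
    val_mono := hV
    root := ⊥
    isBot_root := isBot_bot
    forces_ante := ?_
    not_forces_succ := hq }⟩
  intro δ hδ
  cases δ with
  | var n => exact hδ
  | imp a b =>
    intro v _ ha
    induction v using WithBot.recBotCoe with
    | coe v => exact (forces_glueVal_coe (imp a b) v.1 v.2).2 (hM _ hδ _ _) _ le_rfl ha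
    | bot =>
      exfalso
      cases a with
      | var p => exact hsat p b ha hδ
      | imp a b' =>
        let i : ι := ⟨(a, b', b), hδ⟩
        exact (M i).not_forces_succ ((forces_glueVal_coe _ i _).1 (ha.mono hV bot_le))

theorem derivable_or_refutable_var {Γ : Multiset Fml} {q : ℕ}
    (ih : DecidedBelow (seqRank Γ (var q))) : Derivable Γ (var q) ∨ Refutable Γ (var q) := by
  by_cases hq : var q ∈ Γ
  · obtain ⟨Γ, rfl⟩ := Multiset.exists_cons_of_mem hq
    exact .inl ⟨.ax Γ q, .ax Γ q, rfl, rfl⟩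
  by_cases hpair : ∃ p γ, var p ∈ Γ ∧ imp (var p) γ ∈ Γ
  · obtain ⟨p, γ, hp, hpγ⟩ := hpair
    obtain ⟨Γ, rfl⟩ := Multiset.exists_cons_of_mem hp
    obtain ⟨Γ, rfl⟩ := Multiset.exists_cons_of_mem
      ((Multiset.mem_cons.1 hpγ).resolve_left (by simp))
    exact derivable_or_refutable_var_imp (fun hpq => hq (hpq ▸ Multiset.mem_cons_self _ _)) ih
  -- Unless some instance of (ME→→) settles the sequent, every `Γ ⇒ α → β` with
  -- `(α → β) → γ ∈ Γ` is refutable.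
  by_contra hdec
  refine hdec (.inr (refutable_var_of_saturated hq (fun p γ hp hpγ => hpair ⟨p, γ, hp, hpγ⟩)
    fun α β γ hθ => ?_))
  obtain ⟨Γ, rfl⟩ := Multiset.exists_cons_of_mem hθ
  exact (derivable_or_refutable_or_refutable_imp_imp ih).resolve_left hdec

theorem derivable_or_refutable (Γ : Multiset Fml) (φ : Fml) :
    Derivable Γ φ ∨ Refutable Γ φ := by
  induction hn : seqRank Γ φ using Nat.strong_induction_on generalizing Γ φ with
  | _ n ih =>
  have ih : DecidedBelow (seqRank Γ φ) := fun Δ ψ h => ih _ (hn ▸ h) Δ ψ rfl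
  cases φ with
  | var q => exact derivable_or_refutable_var ih
  | imp α β => exact derivable_or_refutable_imp ih

/-- The cutfree sequent calculus LM→ is sound and complete with respect to minimal
propositional logic: a purely implicational formula `ρ` is valid in minimal logic
(i.e. has a tree-like NM→ proof) if and only if the sequent `⇒ ρ` is provable in
LM→ by a tree-like deduction. -/
theorem LM_sound_complete (ρ : Fml) :
    MinValid ρ ↔ ∃ t : LMT, t.Correct ∧ t.ante = 0 ∧ t.succ = ρ := by
  rw [minValid_iff_prov]
  constructor
  · intro h
    refine (derivable_or_refutable 0 ρ).resolve_right ?_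
    rintro ⟨M⟩
    exact M.not_forces_succ (h.forces M.val_mono (by simp))
  · rintro ⟨t, ht, hante, rfl⟩
    exact ht.prov (by simp [hante])
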